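/- For each integer m ≥ 1 let T_m be the linear map on ℝ² (equipped with the maximum norm) given by the matrix (1/2) · [[1/m, 2 − 1/m], [2 − 1/m, 1/m]], and let U be given by the matrix (1/2) · [[1, 1], [1, 1]]. Let X be the Banach space of bounded ℝ²-valued sequences (x_m)_{m≥1} with the supremum norm, ordered componentwise, and define T : X → X by (T x)_m = T_m(x_m) and 𝒰 : X → X by (𝒰 x)_m = U(x_m). Then T is a positive bounded linear operator with ‖T‖ ≤ 1, and the Cesàro means (1/n) · Σ_{k=0}^{n-1} T^k converge to 𝒰 in the operator norm as n → ∞. -/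

import Mathlib

open Filter BoundedContinuousFunction

/-!
Each block `T_m = (1/2) [[a, 2 - a], [2 - a, a]]` fixes the diagonal of `ℝ²` and multiplies
the antidiagonal by `λ = a - 1 ∈ [-1, 0]`, while `U` is the projection onto the diagonal along the
antidiagonal. Hence the `m`-th block of `(1/n) ∑_{k<n} T^k - U` is `(1/n) ∑_{k<n} λ^k` times the
complementary projection. For `λ ∈ [-1, 0]` the partial geometric sums `s_{n+1} = 1 + λ s_n` stay
in `[0, 1]`, so its norm is at most `1/n`, uniformly in `m`.
-/

theorem geom_sum_mem_Icc_of_neg_one_le_of_nonpos {r : ℝ} (h₁ : -1 ≤ r) (h₀ : r ≤ 0) (n : ℕ) :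
    ∑ k ∈ Finset.range n, r ^ k ∈ Set.Icc (0 : ℝ) 1 := by
  induction n with
  | zero => simp
  | succ n ih =>
    rw [geom_sum_succ]
    obtain ⟨hc₀, hc₁⟩ := ih
    constructor <;> nlinarith

theorem abs_half_mul_add_le {s t u v C : ℝ} (hs : 0 ≤ s) (ht : 0 ≤ t) (hst : s + t = 2)
    (hu : |u| ≤ C) (hv : |v| ≤ C) : |1 / 2 * (s * u + t * v)| ≤ C := by
  rw [abs_le] at *
  constructor <;> nlinarith

noncomputable def avg (p : ℝ × ℝ) : ℝ × ℝ := (1 / 2 * (p.1 + p.2), 1 / 2 * (p.1 + p.2))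

theorem avg_add_smul_sub_avg (p : ℝ × ℝ) (c : ℝ) : avg (avg p + c • (p - avg p)) = avg p := by
  ext <;> simp only [avg, Prod.fst_add, Prod.snd_add, Prod.smul_fst, Prod.smul_snd,
    Prod.fst_sub, Prod.snd_sub, smul_eq_mul] <;> ring

theorem norm_sub_avg_le (p : ℝ × ℝ) : ‖p - avg p‖ ≤ ‖p‖ := by
  have h₁ : |p.1| ≤ ‖p‖ := norm_fst_le p
  have h₂ : |p.2| ≤ ‖p‖ := norm_snd_le p
  rw [abs_le] at h₁ h₂
  refine norm_prod_le_iff.2 ⟨?_, ?_⟩ <;>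
    simp only [avg, Prod.fst_sub, Prod.snd_sub, Real.norm_eq_abs, abs_le] <;>
    constructor <;> linarith

theorem abs_fst_le_norm {α : Type*} [TopologicalSpace α] (x : α →ᵇ ℝ × ℝ) (m : α) :
    |(x m).1| ≤ ‖x‖ :=
  (norm_fst_le (x m)).trans (x.norm_coe_le_norm m)

theorem abs_snd_le_norm {α : Type*} [TopologicalSpace α] (x : α →ᵇ ℝ × ℝ) (m : α) :
    |(x m).2| ≤ ‖x‖ :=
  (norm_snd_le (x m)).trans (x.norm_coe_le_norm m)

def IsBlockOperator {α : Type*} [TopologicalSpace α] (a : α → ℝ)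
    (T : (α →ᵇ ℝ × ℝ) →L[ℝ] (α →ᵇ ℝ × ℝ)) : Prop :=
  ∀ (x : α →ᵇ ℝ × ℝ) (m : α),
    (T x m).1 = 1 / 2 * (a m * (x m).1 + (2 - a m) * (x m).2) ∧
    (T x m).2 = 1 / 2 * ((2 - a m) * (x m).1 + a m * (x m).2)

namespace IsBlockOperator

variable {α : Type*} [TopologicalSpace α] {a : α → ℝ} {T : (α →ᵇ ℝ × ℝ) →L[ℝ] (α →ᵇ ℝ × ℝ)}

theorem nonneg_apply (hT : IsBlockOperator a T) (ha : ∀ m, 0 ≤ a m ∧ a m ≤ 2) (x : α →ᵇ ℝ × ℝ)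
    (hx : ∀ m, 0 ≤ (x m).1 ∧ 0 ≤ (x m).2) (m : α) : 0 ≤ (T x m).1 ∧ 0 ≤ (T x m).2 := by
  obtain ⟨h₁, h₂⟩ := hT x m
  obtain ⟨ha₀, ha₂⟩ := ha m
  obtain ⟨hx₁, hx₂⟩ := hx m
  rw [h₁, h₂]
  constructor <;> nlinarith

theorem norm_le_one (hT : IsBlockOperator a T) (ha : ∀ m, 0 ≤ a m ∧ a m ≤ 2) : ‖T‖ ≤ 1 := by
  refine T.opNorm_le_bound zero_le_one fun x => ?_
  rw [one_mul, norm_le (norm_nonneg x)]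
  intro m
  obtain ⟨h₁, h₂⟩ := hT x m
  obtain ⟨ha₀, ha₂⟩ := ha m
  have hu := abs_fst_le_norm x m
  have hv := abs_snd_le_norm x m
  rw [norm_prod_le_iff, Real.norm_eq_abs, Real.norm_eq_abs, h₁, h₂]
  exact ⟨abs_half_mul_add_le ha₀ (by linarith) (by ring) hu hv,
    abs_half_mul_add_le (by linarith) ha₀ (by ring) hu hv⟩

theorem apply_eq (hT : IsBlockOperator a T) (x : α →ᵇ ℝ × ℝ) (m : α) :
    T x m = avg (x m) + (a m - 1) • (x m - avg (x m)) := by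
  obtain ⟨h₁, h₂⟩ := hT x m
  ext
  · simp only [h₁, avg, Prod.fst_add, Prod.smul_fst, Prod.fst_sub, smul_eq_mul]; ring
  · simp only [h₂, avg, Prod.snd_add, Prod.smul_snd, Prod.snd_sub, smul_eq_mul]; ring

theorem pow_apply (hT : IsBlockOperator a T) (k : ℕ) (x : α →ᵇ ℝ × ℝ) (m : α) :
    (T ^ k) x m = avg (x m) + (a m - 1) ^ k • (x m - avg (x m)) := by
  induction k generalizing x with
  | zero => simp
  | succ k ih =>
    rw [pow_succ, mul_apply_eq_comp, ih, hT.apply_eq, avg_add_smul_sub_avg, add_sub_cancel_left,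
      smul_smul, pow_succ]

theorem cesaro_sub_apply (hT : IsBlockOperator a T) {U : (α →ᵇ ℝ × ℝ) →L[ℝ] (α →ᵇ ℝ × ℝ)}
    (hU : ∀ x m, U x m = avg (x m)) {n : ℕ} (hn : n ≠ 0) (x : α →ᵇ ℝ × ℝ) (m : α) :
    ((n : ℝ)⁻¹ • ∑ k ∈ Finset.range n, T ^ k - U) x m
      = ((n : ℝ)⁻¹ * ∑ k ∈ Finset.range n, (a m - 1) ^ k) • (x m - avg (x m)) := by
  simp only [_root_.sub_apply, _root_.smul_apply, _root_.sum_apply, coe_sub, coe_smul, coe_sum,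
    Finset.sum_apply, Pi.sub_apply, hT.pow_apply, hU]
  rw [Finset.sum_add_distrib, Finset.sum_const, Finset.card_range, ← Finset.sum_smul, smul_add,
    ← Nat.cast_smul_eq_nsmul ℝ, smul_smul, inv_mul_cancel₀ (Nat.cast_ne_zero.2 hn), one_smul,
    add_sub_cancel_left, smul_smul]

theorem norm_cesaro_sub_le (hT : IsBlockOperator a T) (ha : ∀ m, 0 ≤ a m ∧ a m ≤ 1)
    {U : (α →ᵇ ℝ × ℝ) →L[ℝ] (α →ᵇ ℝ × ℝ)} (hU : ∀ x m, U x m = avg (x m)) {n : ℕ} (hn : n ≠ 0) :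
    ‖(n : ℝ)⁻¹ • ∑ k ∈ Finset.range n, T ^ k - U‖ ≤ (n : ℝ)⁻¹ := by
  refine ContinuousLinearMap.opNorm_le_bound _ (by positivity) fun x => ?_
  rw [norm_le (by positivity)]
  intro m
  set c := ∑ k ∈ Finset.range n, (a m - 1) ^ k
  obtain ⟨hc₀, hc₁⟩ : c ∈ Set.Icc (0 : ℝ) 1 :=
    geom_sum_mem_Icc_of_neg_one_le_of_nonpos (by linarith [ha m]) (by linarith [ha m]) n
  rw [hT.cesaro_sub_apply hU hn]
  calc ‖((n : ℝ)⁻¹ * c) • (x m - avg (x m))‖ = (n : ℝ)⁻¹ * (c * ‖x m - avg (x m)‖) := by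
        rw [norm_smul, Real.norm_of_nonneg (by positivity), mul_assoc]
    _ ≤ (n : ℝ)⁻¹ * (1 * ‖x m‖) := by gcongr; exact norm_sub_avg_le _
    _ ≤ (n : ℝ)⁻¹ * ‖x‖ := by rw [one_mul]; gcongr; exact x.norm_coe_le_norm m

theorem tendsto_cesaro (hT : IsBlockOperator a T) (ha : ∀ m, 0 ≤ a m ∧ a m ≤ 1)
    {U : (α →ᵇ ℝ × ℝ) →L[ℝ] (α →ᵇ ℝ × ℝ)} (hU : ∀ x m, U x m = avg (x m)) :
    Tendsto (fun n : ℕ => (n : ℝ)⁻¹ • ∑ k ∈ Finset.range n, T ^ k) atTop (nhds U) := by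
  refine (tendsto_iff_norm_sub_tendsto_zero (b := U)).2 <| squeeze_zero'
    (Eventually.of_forall fun _ => by positivity) ?_ tendsto_inv_atTop_nhds_zero_nat
  filter_upwards [eventually_ne_atTop 0] with n hn using hT.norm_cesaro_sub_le ha hU hn

end IsBlockOperator

theorem cesaro_means_converge_uniformly_for_direct_sum_operator
    (T U : (ℕ →ᵇ (ℝ × ℝ)) →L[ℝ] (ℕ →ᵇ (ℝ × ℝ)))
    (hT : ∀ (x : ℕ →ᵇ (ℝ × ℝ)) (m : ℕ),
      (T x m).1 = (1 / 2) * ((1 / (m + 1 : ℝ)) * (x m).1 + (2 - 1 / (m + 1 : ℝ)) * (x m).2) ∧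
      (T x m).2 = (1 / 2) * ((2 - 1 / (m + 1 : ℝ)) * (x m).1 + (1 / (m + 1 : ℝ)) * (x m).2))
    (hU : ∀ (x : ℕ →ᵇ (ℝ × ℝ)) (m : ℕ),
      (U x m).1 = (1 / 2) * ((x m).1 + (x m).2) ∧
      (U x m).2 = (1 / 2) * ((x m).1 + (x m).2)) :
    (∀ x : ℕ →ᵇ (ℝ × ℝ), (∀ m : ℕ, 0 ≤ (x m).1 ∧ 0 ≤ (x m).2) →
      ∀ m : ℕ, 0 ≤ (T x m).1 ∧ 0 ≤ (T x m).2) ∧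
    ‖T‖ ≤ 1 ∧
    Tendsto (fun n : ℕ => (n : ℝ)⁻¹ • ∑ k ∈ Finset.range n, T ^ k) atTop (nhds U) := by
  have hT' : IsBlockOperator (fun m : ℕ => 1 / (m + 1 : ℝ)) T := hT
  have ha : ∀ m : ℕ, 0 ≤ 1 / (m + 1 : ℝ) ∧ 1 / (m + 1 : ℝ) ≤ 1 := fun m =>
    ⟨by positivity, div_le_one_of_le₀ (by linarith [m.cast_nonneg (α := ℝ)]) (by positivity)⟩
  have ha₂ : ∀ m : ℕ, 0 ≤ 1 / (m + 1 : ℝ) ∧ 1 / (m + 1 : ℝ) ≤ 2 := fun m =>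
    ⟨(ha m).1, (ha m).2.trans one_le_two⟩
  exact ⟨hT'.nonneg_apply ha₂, hT'.norm_le_one ha₂,
    hT'.tendsto_cesaro ha fun x m => Prod.ext (hU x m).1 (hU x m).2⟩
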